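/- Let k ≥ 1 and let a_1,…,a_k and b_1,…,b_k be real numbers with a_1 ≥ a_2 ≥ … ≥ a_{k−1} ≥ |a_k| and b_1 ≥ b_2 ≥ … ≥ b_k ≥ 0. If there exists Y = (y_1,…,y_{2k}) ∈ ℝ^{2k} such that A(a,Y) is SO(2k+1)-conjugate to S = diag(L(b_1),…,L(b_k),0), then the interlacing chain b_1 ≥ a_1 ≥ b_2 ≥ a_2 ≥ … ≥ a_{k−1} ≥ b_k ≥ |a_k| holds. -/

import Mathlib

open Matrix Polynomial

/-- The `m × m` real matrix built from the `2 × 2` blocks `L (c 0), …, L (c (n-1))`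
(where `L a` has first row `(0, -a)` and second row `(a, 0)`) placed along the
diagonal, all remaining entries being `0`.  For `m = 2n` this is
`diag (L c₁, …, L cₙ)`; for `m = 2n+1` this is `diag (L c₁, …, L cₙ, 0)`. -/
def diagL (m n : ℕ) (c : Fin n → ℝ) : Matrix (Fin m) (Fin m) ℝ :=
  Matrix.of fun i j =>
    if h : i.val / 2 = j.val / 2 ∧ i.val / 2 < n then
      if i.val % 2 = 0 ∧ j.val % 2 = 1 then -c ⟨i.val / 2, h.2⟩
      else if i.val % 2 = 1 ∧ j.val % 2 = 0 then c ⟨i.val / 2, h.2⟩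
      else 0
    else 0

/-- `X` and `Y` are conjugate by a special orthogonal matrix:
there is `B` with `BᵀB = 1`, `det B = 1` and `B X B⁻¹ = Y`. -/
def SOConj {m : ℕ} (X Y : Matrix (Fin m) (Fin m) ℝ) : Prop :=
  ∃ B : Matrix (Fin m) (Fin m) ℝ, Bᵀ * B = 1 ∧ B.det = 1 ∧ B * X * B⁻¹ = Y

/-- The `(2k+1) × (2k+1)` real skew-symmetric matrix `A(a, Y)` with top-left
`2k × 2k` block `diag (L a₁, …, L aₖ)`, last column `(y₁, …, y_{2k}, 0)ᵀ` and
last row `(-y₁, …, -y_{2k}, 0)`. -/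
def Aodd (k : ℕ) (a : Fin k → ℝ) (Y : Fin (2*k) → ℝ) :
    Matrix (Fin (2*k+1)) (Fin (2*k+1)) ℝ :=
  Matrix.of fun i j =>
    if hi : i.val < 2*k then
      if hj : j.val < 2*k then diagL (2*k) k a ⟨i.val, hi⟩ ⟨j.val, hj⟩
      else Y ⟨i.val, hi⟩
    else if hj : j.val < 2*k then -Y ⟨j.val, hj⟩ else 0

/-!
Complexify and multiply by `i`: `iA` and `iS` become Hermitian matrices conjugate by a unitary
matrix. The vectors `e_{2j-1} ± i e_{2j}` and `e_{2k+1}` are an orthogonal eigenbasis of `iS`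
with eigenvalues `±b_j` and `0`; the vectors `e_{2j-1} ± i e_{2j}` vanish in the last coordinate,
so they also diagonalize the Hermitian form of `iA`, with values `±a_j`. Two orthogonal families
diagonalizing the same Hermitian form on `ℂ^N` cannot have more than `N` members in total with all
values of the first above `c` and all values of the second at most `c` (their spans would meet).
For `c ≥ 0` this gives `#{j | c < |a_j|} ≤ #{j | c < b_j} ≤ #{j | c < |a_j|} + 1`, and
`c = b_m`, resp. `c = a_m`, turn the two inequalities into the two halves of the chain.
-/

open scoped ComplexOrder
open Finset

theorem dotProduct_mulVec_congr {n R : Type*} [Fintype n] [NonUnitalNonAssocSemiring R]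
    {u v : n → R} {M M' : Matrix n n R} (h : ∀ p q, u p ≠ 0 → v q ≠ 0 → M p q = M' p q) :
    u ⬝ᵥ (M *ᵥ v) = u ⬝ᵥ (M' *ᵥ v) := by
  refine Finset.sum_congr rfl fun p _ => ?_
  by_cases hu : u p = 0
  · simp [hu]
  refine congrArg (u p * ·) (Finset.sum_congr rfl fun q _ => ?_)
  by_cases hv : v q = 0
  · simp [hv]
  exact congrArg (· * v q) (h p q hu hv)

variable {n ι κ : Type*} [Fintype n]

structure DiagonalizesForm (M : Matrix n n ℂ) (v : ι → n → ℂ) (μ : ι → ℝ) : Prop where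
  ne_zero : ∀ i, v i ≠ 0
  orthogonal : Pairwise fun i j => star (v i) ⬝ᵥ v j = 0
  form : ∀ i j, star (v i) ⬝ᵥ (M *ᵥ v j) = μ j * (star (v i) ⬝ᵥ v j)

namespace DiagonalizesForm

variable {M : Matrix n n ℂ} {v : ι → n → ℂ} {μ : ι → ℝ}

theorem of_mulVec_eq_smul (hne : ∀ i, v i ≠ 0)
    (horth : Pairwise fun i j => star (v i) ⬝ᵥ v j = 0)
    (heig : ∀ i, M *ᵥ v i = (μ i : ℂ) • v i) : DiagonalizesForm M v μ :=
  ⟨hne, horth, fun i j => by rw [heig, dotProduct_smul, smul_eq_mul]⟩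

theorem comp (hv : DiagonalizesForm M v μ) {f : κ → ι} (hf : Function.Injective f) :
    DiagonalizesForm M (v ∘ f) (μ ∘ f) :=
  ⟨fun i => hv.ne_zero (f i), hv.orthogonal.comp_of_injective hf, fun i j => hv.form (f i) (f j)⟩

theorem unitary_conj [DecidableEq n] (hv : DiagonalizesForm M v μ) {P : Matrix n n ℂ}
    (hP : Pᴴ * P = 1) : DiagonalizesForm (P * M * Pᴴ) (fun i => P *ᵥ v i) μ := by
  have hdot : ∀ u w : n → ℂ, star (P *ᵥ u) ⬝ᵥ (P *ᵥ w) = star u ⬝ᵥ w := fun u w => by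
    rw [star_mulVec, dotProduct_mulVec, vecMul_vecMul, hP, vecMul_one]
  refine ⟨fun i h => hv.ne_zero i ?_, fun i j hij => ?_, fun i j => ?_⟩
  · simpa [mulVec_mulVec, hP] using congrArg (Pᴴ *ᵥ ·) h
  · exact (hdot _ _).trans (hv.orthogonal hij)
  · rw [hdot, ← hv.form, mulVec_mulVec, Matrix.mul_assoc, Matrix.mul_assoc, hP,
      Matrix.mul_one, ← mulVec_mulVec, hdot]

theorem star_sum_dotProduct_mulVec_sum (hv : DiagonalizesForm M v μ) [Fintype ι] (t : ι → ℂ) :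
    star (∑ i, t i • v i) ⬝ᵥ (M *ᵥ ∑ i, t i • v i)
      = ∑ i, (μ i : ℂ) * (star (t i) * t i * (star (v i) ⬝ᵥ v i)) := by
  classical
  simp only [star_sum, star_smul, mulVec_sum, mulVec_smul, sum_dotProduct, dotProduct_sum,
    smul_dotProduct, dotProduct_smul, hv.form, smul_eq_mul]
  refine Finset.sum_congr rfl fun i _ => ?_
  rw [Finset.sum_eq_single i (fun j _ hji => by rw [hv.orthogonal hji]; ring)
    (by simp)]
  ring

theorem linearIndependent (hv : DiagonalizesForm M v μ) [Fintype ι] :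
    LinearIndependent ℂ v := by
  classical
  refine Fintype.linearIndependent_iff.mpr fun t ht i => ?_
  have h := congrArg (star (v i) ⬝ᵥ ·) ht
  simp only [dotProduct_sum, dotProduct_smul, smul_eq_mul, dotProduct_zero] at h
  rw [Finset.sum_eq_single i (fun j _ hji => by rw [hv.orthogonal hji.symm, mul_zero])
    (by simp)] at h
  exact (mul_eq_zero.mp h).resolve_right (dotProduct_star_self_eq_zero.not.mpr (hv.ne_zero i))

theorem star_sum_dotProduct_sum [DecidableEq n] (hv : DiagonalizesForm M v μ) [Fintype ι]
    (t : ι → ℂ) :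
    star (∑ i, t i • v i) ⬝ᵥ ∑ i, t i • v i
      = ∑ i, star (t i) * t i * (star (v i) ⬝ᵥ v i) := by
  simpa using (of_mulVec_eq_smul (M := 1) (μ := 1) hv.ne_zero hv.orthogonal fun i => by
    simp).star_sum_dotProduct_mulVec_sum t

theorem lt_form_of_mem_span [DecidableEq n] [Fintype ι] (hv : DiagonalizesForm M v μ) {c : ℝ}
    (hμ : ∀ i, c < μ i) {x : n → ℂ} (hx : x ∈ Submodule.span ℂ (Set.range v)) (hx0 : x ≠ 0) :
    c * (star x ⬝ᵥ x) < star x ⬝ᵥ (M *ᵥ x) := by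
  obtain ⟨t, rfl⟩ := (Submodule.mem_span_range_iff_exists_fun ℂ).mp hx
  obtain ⟨i, hi⟩ : ∃ i, t i ≠ 0 := by
    by_contra! h
    simp [h] at hx0
  rw [hv.star_sum_dotProduct_mulVec_sum, hv.star_sum_dotProduct_sum, Finset.mul_sum]
  refine Finset.sum_lt_sum (fun j _ => ?_) ⟨i, Finset.mem_univ i, ?_⟩
  · exact mul_le_mul_of_nonneg_right (by exact_mod_cast (hμ j).le)
      (mul_nonneg (star_mul_self_nonneg _) (dotProduct_star_self_nonneg _))
  · exact mul_lt_mul_of_pos_right (by exact_mod_cast hμ i)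
      (mul_pos (star_mul_self_pos (.of_ne_zero hi))
        (dotProduct_star_self_pos_iff.mpr (hv.ne_zero i)))

theorem form_le_of_mem_span [DecidableEq n] [Fintype ι] (hv : DiagonalizesForm M v μ) {c : ℝ}
    (hμ : ∀ i, μ i ≤ c) {x : n → ℂ} (hx : x ∈ Submodule.span ℂ (Set.range v)) :
    star x ⬝ᵥ (M *ᵥ x) ≤ c * (star x ⬝ᵥ x) := by
  obtain ⟨t, rfl⟩ := (Submodule.mem_span_range_iff_exists_fun ℂ).mp hx
  rw [hv.star_sum_dotProduct_mulVec_sum, hv.star_sum_dotProduct_sum, Finset.mul_sum]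
  exact Finset.sum_le_sum fun j _ => mul_le_mul_of_nonneg_right (by exact_mod_cast hμ j)
    (mul_nonneg (star_mul_self_nonneg _) (dotProduct_star_self_nonneg _))

theorem card_filter_lt_add_card_filter_le [DecidableEq n] [Fintype ι] [Fintype κ]
    {w : κ → n → ℂ} {ν : κ → ℝ} (hv : DiagonalizesForm M v μ) (hw : DiagonalizesForm M w ν)
    (c : ℝ) : #{i | c < μ i} + #{j | ν j ≤ c} ≤ Fintype.card n := by
  set V := Submodule.span ℂ (Set.range fun i : {i // c < μ i} => v i)
  set W := Submodule.span ℂ (Set.range fun j : {j // ν j ≤ c} => w j)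
  have hV : Module.finrank ℂ V = #{i | c < μ i} :=
    (finrank_span_eq_card (hv.comp Subtype.val_injective).linearIndependent).trans
      (Fintype.card_subtype _)
  have hW : Module.finrank ℂ W = #{j | ν j ≤ c} :=
    (finrank_span_eq_card (hw.comp Subtype.val_injective).linearIndependent).trans
      (Fintype.card_subtype _)
  by_contra! hcard
  have hinf : 0 < Module.finrank ℂ ↥(V ⊓ W) := by
    have := Submodule.finrank_sup_add_finrank_inf_eq V W
    have := (V ⊔ W).finrank_le
    rw [Module.finrank_fintype_fun_eq_card] at this
    omega
  obtain ⟨x, hx, hx0⟩ := Submodule.exists_mem_ne_zero_of_ne_bot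
    (Submodule.one_le_finrank_iff.mp hinf)
  exact lt_irrefl _ <|
    ((hv.comp Subtype.val_injective).lt_form_of_mem_span (fun i => i.2) hx.1 hx0).trans_le
      ((hw.comp Subtype.val_injective).form_le_of_mem_span (fun j => j.2) hx.2)

end DiagonalizesForm

theorem SOConj.exists_unitary {m : ℕ} {X Y : Matrix (Fin m) (Fin m) ℝ} (h : SOConj X Y) :
    ∃ P : Matrix (Fin m) (Fin m) ℂ, Pᴴ * P = 1 ∧
      Complex.I • X.map (↑) = P * (Complex.I • Y.map (↑)) * Pᴴ := by
  obtain ⟨B, hB, -, hXY⟩ := h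
  have hX : X = Bᵀ * Y * B := by
    rw [← hXY, Matrix.inv_eq_left_inv hB, ← Matrix.mul_assoc, ← Matrix.mul_assoc, hB,
      Matrix.one_mul, Matrix.mul_assoc, hB, Matrix.mul_one]
  have hmul : ∀ C D : Matrix (Fin m) (Fin m) ℝ,
      (C * D).map ((↑) : ℝ → ℂ) = C.map (↑) * D.map (↑) :=
    fun C D => Matrix.map_mul (f := Complex.ofRealHom)
  have hstar : (Bᵀ.map ((↑) : ℝ → ℂ))ᴴ = B.map (↑) := by ext; simp
  refine ⟨Bᵀ.map (↑), ?_, ?_⟩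
  · rw [hstar, ← hmul, mul_eq_one_comm.mp hB,
      Matrix.map_one _ Complex.ofReal_zero Complex.ofReal_one]
  · rw [hstar, hX, hmul, hmul, Matrix.mul_smul, Matrix.smul_mul]

section DiagL

variable {m n : ℕ}

theorem diagL_apply_two_mul (c : Fin n → ℝ) (p : Fin m) (j : Fin n) (h : 2 * j.val < m) :
    diagL m n c p ⟨2 * j, h⟩ = if p.val = 2 * j + 1 then c j else 0 := by
  simp only [diagL, of_apply]
  split_ifs <;> first | omega | rfl | (congr 1; ext; simp only; omega)

theorem diagL_apply_two_mul_add_one (c : Fin n → ℝ) (p : Fin m) (j : Fin n)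
    (h : 2 * j.val + 1 < m) :
    diagL m n c p ⟨2 * j + 1, h⟩ = if p.val = 2 * j then -c j else 0 := by
  simp only [diagL, of_apply]
  split_ifs <;> first | omega | rfl | (congr 2; ext; simp only; omega)

theorem diagL_apply_of_le (c : Fin n → ℝ) (p q : Fin m) (hq : 2 * n ≤ q.val) :
    diagL m n c p q = 0 := by
  simp only [diagL, of_apply]
  split_ifs <;> first | omega | rfl

end DiagL

def boolSign (s : Bool) : ℝ := if s then 1 else -1

theorem boolSign_mul_self (s : Bool) : boolSign s * boolSign s = 1 := by
  cases s <;> norm_num [boolSign]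

section Blocks

variable {k : ℕ}

noncomputable def blockVec (k : ℕ) (x : Fin k × Bool) : Fin (2 * k + 1) → ℂ :=
  Pi.single ⟨2 * x.1, by omega⟩ 1 +
    (boolSign x.2 * Complex.I) • Pi.single ⟨2 * x.1 + 1, by omega⟩ 1

noncomputable def lastVec (k : ℕ) : Fin (2 * k + 1) → ℂ := Pi.single (Fin.last (2 * k)) 1

def blockVal (c : Fin k → ℝ) (x : Fin k × Bool) : ℝ := boolSign x.2 * c x.1

theorem blockVec_apply (x : Fin k × Bool) (p : Fin (2 * k + 1)) :
    blockVec k x p = if p.val = 2 * x.1 then 1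
      else if p.val = 2 * x.1 + 1 then boolSign x.2 * Complex.I else 0 := by
  simp only [blockVec, Pi.add_apply, Pi.smul_apply, Pi.single_apply, Fin.ext_iff]
  split_ifs <;> first | omega | simp

theorem blockVec_ne_zero (x : Fin k × Bool) : blockVec k x ≠ 0 := fun h => by
  simpa [blockVec_apply] using congrFun h ⟨2 * x.1, by omega⟩

theorem lastVec_ne_zero : lastVec k ≠ 0 := by
  simp [lastVec]

theorem blockVec_apply_eq_zero {x : Fin k × Bool} {p : Fin (2 * k + 1)} (hp : 2 * k ≤ p.val) :
    blockVec k x p = 0 := by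
  rw [blockVec_apply, if_neg (by omega), if_neg (by omega)]

theorem star_blockVec_dotProduct (x y : Fin k × Bool) :
    star (blockVec k x) ⬝ᵥ blockVec k y =
      if x.1 = y.1 then ((1 + boolSign x.2 * boolSign y.2 : ℝ) : ℂ) else 0 := by
  conv_lhs => rw [blockVec]
  simp only [star_add, star_smul, add_dotProduct, smul_dotProduct, Pi.star_single, star_one,
    single_dotProduct, one_mul, blockVec_apply]
  split_ifs <;> try omega
  · simp only [smul_eq_mul, star_mul', Complex.star_def, Complex.conj_ofReal, Complex.conj_I]
    push_cast
    linear_combination -(↑(boolSign x.2) * ↑(boolSign y.2) : ℂ) * Complex.I_sq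
  · simp

theorem blockVec_orthogonal : Pairwise fun x y => star (blockVec k x) ⬝ᵥ blockVec k y = 0 := by
  rintro ⟨j, s⟩ ⟨j', s'⟩ hne
  rw [star_blockVec_dotProduct]
  split_ifs with h
  · obtain rfl : j = j' := h
    obtain rfl : s' = !s := by cases s <;> cases s' <;> simp_all
    cases s <;> norm_num [boolSign]
  · rfl

theorem star_lastVec_dotProduct_blockVec (x : Fin k × Bool) :
    star (lastVec k) ⬝ᵥ blockVec k x = 0 := by
  simp [lastVec, blockVec_apply_eq_zero]

theorem star_blockVec_dotProduct_lastVec (x : Fin k × Bool) :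
    star (blockVec k x) ⬝ᵥ lastVec k = 0 := by
  simp [lastVec, blockVec_apply_eq_zero]

noncomputable def blockBasis (k : ℕ) : Option (Fin k × Bool) → Fin (2 * k + 1) → ℂ
  | none => lastVec k
  | some x => blockVec k x

def blockBasisVal (c : Fin k → ℝ) : Option (Fin k × Bool) → ℝ
  | none => 0
  | some x => blockVal c x

theorem blockBasis_orthogonal :
    Pairwise fun o o' => star (blockBasis k o) ⬝ᵥ blockBasis k o' = 0 := by
  rintro (_ | x) (_ | y) hne
  · exact absurd rfl hne
  · exact star_lastVec_dotProduct_blockVec y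
  · exact star_blockVec_dotProduct_lastVec x
  · exact blockVec_orthogonal (Option.some_injective _ |>.ne_iff.mp hne)

end Blocks

section Eigen

variable {k : ℕ}

theorem diagL_mulVec_blockVec (c : Fin k → ℝ) (x : Fin k × Bool) :
    (Complex.I • (diagL (2 * k + 1) k c).map (↑)) *ᵥ blockVec k x
      = (blockVal c x : ℂ) • blockVec k x := by
  conv_lhs => rw [blockVec]
  funext p
  simp only [mulVec_add, mulVec_smul, mulVec_single_one, Pi.add_apply, Pi.smul_apply, col_apply,
    Matrix.smul_apply, map_apply, smul_eq_mul]
  rw [diagL_apply_two_mul, diagL_apply_two_mul_add_one, blockVec_apply, blockVal]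
  have hs : (boolSign x.2 : ℂ) * boolSign x.2 = 1 := by exact_mod_cast boolSign_mul_self x.2
  split_ifs <;> (try omega) <;> push_cast
  · linear_combination (-(c x.1 : ℂ) * Complex.I) * hs
  · linear_combination -((boolSign x.2 : ℂ) * c x.1) * Complex.I_sq
  · ring

theorem diagL_mulVec_lastVec (c : Fin k → ℝ) :
    (Complex.I • (diagL (2 * k + 1) k c).map (↑)) *ᵥ lastVec k = 0 := by
  funext p
  simp [lastVec, diagL_apply_of_le]

end Eigen

theorem Aodd_apply_of_lt {k : ℕ} (a : Fin k → ℝ) (Y : Fin (2 * k) → ℝ) {p q : Fin (2 * k + 1)}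
    (hp : p.val < 2 * k) (hq : q.val < 2 * k) : Aodd k a Y p q = diagL (2 * k + 1) k a p q := by
  simp only [Aodd, of_apply, dif_pos hp, dif_pos hq]
  rfl

theorem diagonalizesForm_Aodd {k : ℕ} (a : Fin k → ℝ) (Y : Fin (2 * k) → ℝ) :
    DiagonalizesForm (Complex.I • (Aodd k a Y).map (↑)) (blockVec k) (blockVal a) := by
  have hD := DiagonalizesForm.of_mulVec_eq_smul blockVec_ne_zero blockVec_orthogonal
    (diagL_mulVec_blockVec a)
  refine ⟨hD.ne_zero, hD.orthogonal, fun x y => (dotProduct_mulVec_congr ?_).trans (hD.form x y)⟩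
  intro p q hp hq
  have hp' : p.val < 2 * k := by
    by_contra! h
    simp [blockVec_apply_eq_zero h] at hp
  have hq' : q.val < 2 * k := by
    by_contra! h
    exact hq (blockVec_apply_eq_zero h)
  simp [Aodd_apply_of_lt a Y hp' hq']

theorem diagonalizesForm_diagL {k : ℕ} (b : Fin k → ℝ) :
    DiagonalizesForm (Complex.I • (diagL (2 * k + 1) k b).map (↑))
      (blockBasis k) (blockBasisVal b) := by
  refine .of_mulVec_eq_smul ?_ blockBasis_orthogonal ?_
  · rintro (_ | x)
    exacts [lastVec_ne_zero, blockVec_ne_zero x]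
  · rintro (_ | x)
    · simp [blockBasis, blockBasisVal, diagL_mulVec_lastVec]
    · exact diagL_mulVec_blockVec b x

section Counting

variable {k : ℕ} {c : ℝ}

theorem card_filter_lt_blockVal (a : Fin k → ℝ) (hc : 0 ≤ c) :
    #{x | c < blockVal a x} = #{j | c < |a j|} := by
  rw [card_filter, card_filter, Fintype.sum_prod_type]
  refine sum_congr rfl fun j _ => ?_
  simp only [Fintype.sum_bool, blockVal, boolSign, if_true, Bool.false_eq_true, if_false]
  rcases le_total 0 (a j) with h | h
  · rw [abs_of_nonneg h]; split_ifs <;> linarith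
  · rw [abs_of_nonpos h]; split_ifs <;> linarith

theorem card_filter_lt_blockBasisVal (b : Fin k → ℝ) (hc : 0 ≤ c) :
    #{o | c < blockBasisVal b o} = #{j | c < |b j|} := by
  rw [← card_filter_lt_blockVal b hc, card_filter, card_filter, Fintype.sum_option]
  simp only [blockBasisVal, not_lt.mpr hc, if_false, zero_add]
  congr! 2

theorem card_filter_lt_abs_interlace {a b : Fin k → ℝ} {Y : Fin (2 * k) → ℝ}
    (h : SOConj (Aodd k a Y) (diagL (2 * k + 1) k b)) (hc : 0 ≤ c) :
    #{j | c < |a j|} ≤ #{j | c < |b j|} ∧ #{j | c < |b j|} ≤ #{j | c < |a j|} + 1 := by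
  obtain ⟨P, hP, hconj⟩ := h.exists_unitary
  have hA := diagonalizesForm_Aodd a Y
  have hS : DiagonalizesForm (Complex.I • (Aodd k a Y).map (↑))
      (fun o => P *ᵥ blockBasis k o) (blockBasisVal b) :=
    hconj ▸ (diagonalizesForm_diagL b).unitary_conj hP
  have hAS := hA.card_filter_lt_add_card_filter_le hS c
  have hSA := hS.card_filter_lt_add_card_filter_le hA c
  have hA' := card_filter_add_card_filter_not (s := univ) (fun x => c < blockVal a x)
  have hS' := card_filter_add_card_filter_not (s := univ) (fun o => c < blockBasisVal b o)
  simp only [not_lt, card_univ, Fintype.card_option, Fintype.card_prod, Fintype.card_bool,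
    Fintype.card_fin] at hA' hS' hAS hSA
  rw [card_filter_lt_blockVal a hc] at hA' hAS
  rw [card_filter_lt_blockBasisVal b hc] at hS' hSA
  omega

end Counting

section Antitone

variable {α : Type*} [Preorder α] {k : ℕ}

theorem antitone_fin_of_succ_le {f : Fin k → α}
    (h : ∀ (i : Fin k) (hi : i.val + 1 < k), f ⟨i.val + 1, hi⟩ ≤ f i) : Antitone f := by
  rintro i ⟨j, hj⟩ (hij : i.val ≤ j)
  induction j, hij using Nat.le_induction with
  | base => rfl
  | succ j hij ih => exact (h ⟨j, Nat.lt_of_succ_lt hj⟩ hj).trans (ih _)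

theorem Antitone.lt_card_filter_lt {f : Fin k → ℝ} (hf : Antitone f) {m : Fin k} {c : ℝ}
    (h : c < f m) : m.val < #{j | c < f j} :=
  calc m.val < #(Iic m) := by rw [Fin.card_Iic]; omega
    _ ≤ #{j | c < f j} := card_le_card fun j hj =>
      mem_filter.mpr ⟨mem_univ j, h.trans_le (hf (mem_Iic.mp hj))⟩

theorem Antitone.card_filter_lt_le {f : Fin k → ℝ} (hf : Antitone f) {m : Fin k} {c : ℝ}
    (h : f m ≤ c) : #{j | c < f j} ≤ m.val :=
  calc #{j | c < f j} ≤ #(Iio m) := card_le_card fun _ hj =>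
      mem_Iio.mpr (lt_of_not_ge fun hmj => ((mem_filter.mp hj).2.trans_le ((hf hmj).trans h)).false)
    _ = m.val := Fin.card_Iio m

end Antitone

theorem abs_succ_le_of_succ_le {k : ℕ} {a : Fin k → ℝ}
    (ha1 : ∀ (i : Fin k) (hi : i.val + 2 < k), a ⟨i.val + 1, by omega⟩ ≤ a i)
    (ha2 : ∀ h : 2 ≤ k, |a ⟨k - 1, by omega⟩| ≤ a ⟨k - 2, by omega⟩)
    (i : Fin k) (hi : i.val + 1 < k) : |a ⟨i.val + 1, hi⟩| ≤ a i := by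
  have hhead : Antitone fun j : Fin (k - 1) => a ⟨j, by omega⟩ :=
    antitone_fin_of_succ_le fun j hj => ha1 ⟨j, by omega⟩ (by simp only; omega)
  have hlast : ∀ j : Fin k, j.val + 1 < k → |a ⟨k - 1, by omega⟩| ≤ a j := fun j hj =>
    (ha2 (by omega)).trans (hhead (Fin.mk_le_mk.mpr (by omega) :
      (⟨j, by omega⟩ : Fin (k - 1)) ≤ ⟨k - 2, by omega⟩))
  rcases Nat.lt_or_ge (i.val + 2) k with h | h
  · rw [abs_of_nonneg ((abs_nonneg _).trans (hlast _ h))]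
    exact ha1 i h
  · obtain ⟨i, hik⟩ := i
    obtain rfl : i = k - 2 := by simp only at h hi; omega
    simpa only [show k - 2 + 1 = k - 1 by omega] using ha2 (by omega)

/-- Lemma (openodd), necessity part: if `a₁ ≥ … ≥ a_{k-1} ≥ |a_k|`,
`b₁ ≥ … ≥ b_k ≥ 0`, and some `Y` makes `A(a, Y)` SO(2k+1)-conjugate to
`S = diag (L b₁, …, L b_k, 0)`, then the interlacing chain
`b₁ ≥ a₁ ≥ b₂ ≥ a₂ ≥ … ≥ a_{k-1} ≥ b_k ≥ |a_k|` holds. -/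
theorem statement1 (k : ℕ) (hk : 1 ≤ k) (a b : Fin k → ℝ)
    (ha1 : ∀ i : ℕ, ∀ h : i + 2 < k, a ⟨i, by omega⟩ ≥ a ⟨i + 1, by omega⟩)
    (ha2 : 2 ≤ k → a ⟨k - 2, by omega⟩ ≥ |a ⟨k - 1, by omega⟩|)
    (hb1 : ∀ i : ℕ, ∀ h : i + 1 < k, b ⟨i, by omega⟩ ≥ b ⟨i + 1, h⟩)
    (hb2 : b ⟨k - 1, by omega⟩ ≥ 0)
    (hY : ∃ Y : Fin (2*k) → ℝ, SOConj (Aodd k a Y) (diagL (2*k+1) k b)) :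
    (∀ i : ℕ, ∀ h : i + 1 < k, b ⟨i, by omega⟩ ≥ a ⟨i, by omega⟩) ∧
    (∀ i : ℕ, ∀ h : i + 1 < k, a ⟨i, by omega⟩ ≥ b ⟨i + 1, h⟩) ∧
    b ⟨k - 1, by omega⟩ ≥ |a ⟨k - 1, by omega⟩| := by
  obtain ⟨Y, hY⟩ := hY
  have hb : Antitone b := antitone_fin_of_succ_le fun i hi => hb1 i hi
  have hb0 : ∀ j, 0 ≤ b j := fun j => hb2.trans (hb (Fin.mk_le_mk.mpr (by omega)))
  have hb_abs : ∀ j, |b j| = b j := fun j => abs_of_nonneg (hb0 j)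
  have ha := abs_succ_le_of_succ_le (fun i hi => ha1 i hi) ha2
  have ha0 : ∀ i (h : i + 1 < k), 0 ≤ a ⟨i, by omega⟩ := fun i h =>
    (abs_nonneg _).trans (ha ⟨i, by omega⟩ h)
  have habs : Antitone fun j => |a j| :=
    antitone_fin_of_succ_le fun i hi => (ha i hi).trans (le_abs_self _)
  have hle : ∀ m : Fin k, |a m| ≤ b m := by
    intro m
    by_contra! h
    have hcount := (card_filter_lt_abs_interlace hY (hb0 m)).1
    simp only [hb_abs] at hcount
    have ha_count := habs.lt_card_filter_lt h
    have hb_count := hb.card_filter_lt_le (le_refl (b m))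
    omega
  refine ⟨fun i h => (le_abs_self _).trans (hle _), fun i h => ?_, hle _⟩
  by_contra! hlt
  have hcount := (card_filter_lt_abs_interlace hY (ha0 i h)).2
  simp only [hb_abs] at hcount
  have hb_count := hb.lt_card_filter_lt (m := ⟨i + 1, h⟩) hlt
  have ha_count := habs.card_filter_lt_le (m := ⟨i, by omega⟩) (abs_of_nonneg (ha0 i h)).le
  simp only at hb_count ha_count
  omega
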